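/- arXiv:2512.22844 — 2 statements merged into one kernel-verified Lean document; each statement's English description precedes it below -/
import Mathlib

section
/- There exists a constant C > 0 such that for every integer m ≥ 1 and every integer n with m + n even, and for every real number z ∈ [n - 2, n + 2], one has |G(m, n) − 2 p_m(z)| ≤ C/m, where p_m(z) = (2πm)^{-1/2} exp(-z²/(2m)). -/
/-!
Write `m = k + l` and `n = k - l`, so that `G(m, n) = C(m, k) / 2^m`, and put `x = n / m`.
Stirling's formula with Robbins' error term gives
`C(m, k) / 2^m = √(2 / (π m)) (1 - x²)^(-1/2) exp (-m φ(x) + O(1/k + 1/l))`, where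
`φ(x) = ((1 + x) log (1 + x) + (1 - x) log (1 - x)) / 2 = x² / 2 + O(x⁴)`.
In the central range `n⁸ ≤ m⁵` every error term is `O(m^(-1/2))` relative to
`2 p_m(n) = √(2 / (π m)) exp (-n² / (2 m))`, which is itself `O(m^(-1/2))`.
Outside that range the Chernoff bound `G(m, n) ≤ exp (-n² / (2 m))` makes both `G(m, n)` and
`2 p_m(n)` of order `1/m`. Finally `p_m` is `1/(2m)`-Lipschitz, which moves `n` to `z`.
-/

noncomputable section

/-- The heat kernel `p_t(x) = (2πt)^{-1/2} exp(-x²/(2t))`. -/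
def heatK (t x : ℝ) : ℝ := Real.exp (-x ^ 2 / (2 * t)) / Real.sqrt (2 * Real.pi * t)

/-- `G m n = P(S_m = n)`, the probability mass function of the simple random walk
`S_m = Z_1 + … + Z_m` with i.i.d. steps `Z_i` uniform on `{-1, 1}`. -/
def rwG (m : ℕ) (n : ℤ) : ℝ :=
  ((Finset.univ.filter fun f : Fin m → Bool =>
      (∑ i, if f i then (1 : ℤ) else -1) = n).card : ℝ) / 2 ^ m

open Real Filter Topology
open scoped Nat

namespace Stirling

theorem monotone_log_stirlingSeq_sub :
    Monotone fun n : ℕ => log (stirlingSeq (n + 1)) - 1 / (12 * ((n : ℝ) + 1)) := by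
  refine monotone_nat_of_le_succ fun n => ?_
  have h := log_stirlingSeq_sdiff_le (n + 1)
  have e : 1 / (12 * ((n : ℝ) + 1)) - 1 / (12 * ((n : ℝ) + 1 + 1))
      = 1 / (12 * ((n + 1 : ℕ) : ℝ) * ((n + 1 : ℕ) + 1)) := by
    push_cast; field_simp; ring
  push_cast at h e ⊢
  linarith

theorem stirlingSeq_le_sqrt_pi_mul_exp {n : ℕ} (hn : n ≠ 0) :
    stirlingSeq n ≤ √π * exp (1 / (12 * n)) := by
  obtain ⟨n, rfl⟩ := Nat.exists_eq_succ_of_ne_zero hn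
  have hlim : Tendsto (fun n : ℕ => log (stirlingSeq (n + 1)) - 1 / (12 * ((n : ℝ) + 1)))
      atTop (𝓝 (log √π - 0)) := by
    refine ((continuousAt_log (by positivity)).tendsto.comp
      (tendsto_stirlingSeq_sqrt_pi.comp (tendsto_add_atTop_nat 1))).sub ?_
    simpa [mul_comm] using tendsto_one_div_add_atTop_nhds_zero_nat.const_mul (1 / 12 : ℝ)
  have h := monotone_log_stirlingSeq_sub.ge_of_tendsto hlim n
  rw [sub_zero, sub_le_iff_le_add, ← exp_le_exp, exp_add, exp_log (stirlingSeq'_pos n),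
    exp_log (by positivity)] at h
  simpa using h

theorem factorial_le_stirling_mul_exp {n : ℕ} (hn : n ≠ 0) :
    (n ! : ℝ) ≤ √(2 * π * n) * (n / exp 1) ^ n * exp (1 / (12 * n)) := by
  have hpos : 0 < √(2 * n) * (n / exp 1) ^ n := by positivity
  have h := stirlingSeq_le_sqrt_pi_mul_exp hn
  rw [stirlingSeq, div_le_iff₀ hpos] at h
  calc (n ! : ℝ) ≤ √π * exp (1 / (12 * n)) * (√(2 * n) * (n / exp 1) ^ n) := h
    _ = _ := by rw [show 2 * π * n = π * (2 * n) by ring, sqrt_mul pi_pos.le]; ring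

end Stirling

def stirlingApprox (n : ℕ) : ℝ := √(2 * π * n) * (n / exp 1) ^ n

theorem stirlingApprox_pos {n : ℕ} (hn : n ≠ 0) : 0 < stirlingApprox n := by
  unfold stirlingApprox; positivity

/-- `φ` above: the Kullback–Leibler divergence of a coin with bias `(1 + x) / 2` from a fair
coin. -/
def klHalf (x : ℝ) : ℝ := ((1 + x) * log (1 + x) + (1 - x) * log (1 - x)) / 2

theorem hasSum_klHalf {x : ℝ} (hx : |x| < 1) :
    HasSum (fun k : ℕ => (x ^ 2) ^ (k + 1) / ((2 * k + 1) * (2 * k + 2))) (klHalf x) := by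
  have hx2 : |x ^ 2| < 1 := by simpa [abs_pow] using pow_lt_one₀ (abs_nonneg x) hx two_ne_zero
  have h := ((hasSum_log_sub_log_of_abs_lt_one hx).mul_left (x / 2)).sub
    ((hasSum_pow_div_log_of_abs_lt_one hx2).mul_left (1 / 2))
  obtain ⟨h1, h2⟩ := abs_lt.mp hx
  have hlog : log (1 - x ^ 2) = log (1 + x) + log (1 - x) := by
    rw [← log_mul (by linarith) (by linarith)]; ring_nf
  rw [hlog] at h
  have hterm (k : ℕ) : x / 2 * (2 * (1 / (2 * (k : ℝ) + 1)) * x ^ (2 * k + 1))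
      - 1 / 2 * ((x ^ 2) ^ (k + 1) / ((k : ℝ) + 1)) =
        (x ^ 2) ^ (k + 1) / ((2 * k + 1) * (2 * k + 2)) := by
    rw [pow_succ x (2 * k), pow_mul]
    field_simp
    ring
  have hsum :
      x / 2 * (log (1 + x) - log (1 - x)) - 1 / 2 * -(log (1 + x) + log (1 - x)) = klHalf x := by
    rw [klHalf]; ring
  simpa only [hterm, hsum] using h

theorem sq_div_two_le_klHalf {x : ℝ} (hx : |x| < 1) : x ^ 2 / 2 ≤ klHalf x := by
  refine le_trans (le_of_eq (by norm_num)) (le_hasSum (hasSum_klHalf hx) 0 fun k _ => ?_)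
  positivity

theorem klHalf_le {x : ℝ} (hx : x ^ 2 ≤ 1 / 2) : klHalf x ≤ x ^ 2 / 2 + x ^ 4 := by
  have hx' : |x| < 1 := by
    rw [← abs_one, ← sq_lt_sq, one_pow]; linarith
  have hgeo : HasSum (fun k : ℕ => x ^ 2 / 2 * (x ^ 2) ^ k) (x ^ 2 / 2 * (1 - x ^ 2)⁻¹) :=
    (hasSum_geometric_of_lt_one (sq_nonneg x) (by linarith)).mul_left _
  have hle := hasSum_le (fun k => ?_) (hasSum_klHalf hx') hgeo
  · have h1 : 0 < 1 - x ^ 2 := by linarith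
    calc klHalf x ≤ x ^ 2 / 2 * (1 - x ^ 2)⁻¹ := hle
      _ ≤ x ^ 2 / 2 + x ^ 4 := by
        rw [← div_eq_mul_inv, div_le_iff₀ h1]
        nlinarith [sq_nonneg x, sq_nonneg (x ^ 2)]
  · rw [_root_.pow_succ', div_mul_eq_mul_div, mul_comm]
    gcongr
    nlinarith [(Nat.cast_nonneg k : (0:ℝ) ≤ k)]

theorem exp_neg_mul_klHalf {k l : ℕ} (hk : k ≠ 0) (hl : l ≠ 0) :
    exp (-(((k : ℝ) + l) * klHalf ((k - l) / (k + l)))) =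
      ((k : ℝ) + l) ^ (k + l) / ((k : ℝ) ^ k * (l : ℝ) ^ l * 2 ^ (k + l)) := by
  have hk' : (0 : ℝ) < k := by positivity
  have hl' : (0 : ℝ) < l := by positivity
  have hm : (0 : ℝ) < k + l := by positivity
  have e1 : 1 + (k - l) / (k + l) = 2 * k / ((k : ℝ) + l) := by field_simp; ring
  have e2 : 1 - (k - l) / (k + l) = 2 * l / ((k : ℝ) + l) := by field_simp; ring
  have hlog (a : ℝ) (ha : 0 < a) : log (2 * a / (k + l)) = log 2 + log a - log (k + l) := by
    rw [log_div (by positivity) hm.ne', log_mul two_ne_zero ha.ne']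
  rw [← exp_log (by positivity :
      (0 : ℝ) < ((k : ℝ) + l) ^ (k + l) / ((k : ℝ) ^ k * (l : ℝ) ^ l * 2 ^ (k + l))),
    klHalf, e1, e2, hlog _ hk', hlog _ hl', log_div (by positivity) (by positivity),
    log_mul (by positivity) (by positivity), log_mul (by positivity) (by positivity)]
  simp only [log_pow]
  push_cast
  congr 1
  field_simp
  ring

theorem sqrt_two_pi_mul_sqrt_two_pi {k l : ℝ} (hk : 0 ≤ k) (hl : 0 ≤ l) :
    √(2 * π * k) * √(2 * π * l) = π * (k + l) * √(1 - ((k - l) / (k + l)) ^ 2) := by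
  rcases (add_nonneg hk hl).eq_or_lt with h | h
  · obtain ⟨rfl, rfl⟩ : k = 0 ∧ l = 0 := ⟨by linarith, by linarith⟩
    simp
  rw [← sqrt_mul (by positivity), ← sqrt_sq (by positivity : 0 ≤ π * (k + l)),
    ← sqrt_mul (by positivity)]
  congr 1
  field_simp
  ring

theorem stirlingApprox_add_div {k l : ℕ} (hk : k ≠ 0) (hl : l ≠ 0) :
    stirlingApprox (k + l) / (stirlingApprox k * stirlingApprox l * 2 ^ (k + l)) =
      2 / √(2 * π * (k + l)) / √(1 - (((k : ℝ) - l) / (k + l)) ^ 2) *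
        exp (-(((k : ℝ) + l) * klHalf ((k - l) / (k + l)))) := by
  have hk' : (0 : ℝ) < k := by positivity
  have hl' : (0 : ℝ) < l := by positivity
  have hsq : 2 / √(2 * π * (k + l)) = √(2 * π * (k + l)) / (π * (k + l)) := by
    rw [div_eq_div_iff (by positivity) (by positivity), mul_self_sqrt (by positivity)]; ring
  rw [exp_neg_mul_klHalf hk hl, hsq, div_div, ← sqrt_two_pi_mul_sqrt_two_pi hk'.le hl'.le,
    stirlingApprox, stirlingApprox, stirlingApprox, div_pow, div_pow, div_pow, pow_add (exp 1)]
  push_cast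
  field_simp

theorem exp_neg_sq_le_sqrt_one_sub_sq {x : ℝ} (hx : x ^ 2 ≤ 1 / 2) :
    exp (-x ^ 2) ≤ √(1 - x ^ 2) := by
  rw [le_sqrt (exp_pos _).le (by nlinarith), ← exp_nat_mul, le_sub_comm, ← sub_nonneg]
  have h := add_one_le_exp (2 * x ^ 2)
  have h' : exp ((2 : ℕ) * -x ^ 2) * exp (2 * x ^ 2) = 1 := by rw [← exp_add]; push_cast; simp
  nlinarith [sq_nonneg x, exp_pos ((2 : ℕ) * -x ^ 2)]

theorem heatK_nonneg (t x : ℝ) : 0 ≤ heatK t x := by unfold heatK; positivity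

theorem two_le_sqrt_two_pi : 2 ≤ √(2 * π) :=
  le_sqrt_of_sq_le (by nlinarith [pi_gt_three])

theorem two_mul_heatK_le {t : ℝ} (ht : 0 < t) (x : ℝ) :
    2 * heatK t x ≤ exp (-x ^ 2 / (2 * t)) / √t := by
  have he := exp_pos (-x ^ 2 / (2 * t))
  have hst := sqrt_pos.mpr ht
  rw [heatK, ← mul_div_assoc, div_le_div_iff₀ (by positivity) hst, sqrt_mul (by positivity)]
  nlinarith [mul_nonneg (mul_nonneg he.le hst.le) (sub_nonneg.2 two_le_sqrt_two_pi)]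

theorem two_mul_heatK_add_sub (k l : ℕ) :
    2 * heatK (k + l) (k - l) =
      2 / √(2 * π * (k + l)) *
        exp (-(((k : ℝ) + l) * ((((k : ℝ) - l) / (k + l)) ^ 2 / 2))) := by
  rcases Nat.eq_zero_or_pos (k + l) with h | h
  · obtain ⟨rfl, rfl⟩ : k = 0 ∧ l = 0 := by omega
    simp [heatK]
  have : (0 : ℝ) < k + l := by exact_mod_cast h
  rw [heatK]
  field_simp

theorem hasDerivAt_heatK (t x : ℝ) : HasDerivAt (heatK t) (-(x / t) * heatK t x) x := by
  have h : HasDerivAt (fun x => -x ^ 2 / (2 * t)) (-(2 * x) / (2 * t)) x := by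
    simpa using ((hasDerivAt_pow 2 x).neg).div_const (2 * t)
  refine (h.exp.div_const (√(2 * π * t))).congr_deriv ?_
  rw [heatK]
  ring

theorem abs_mul_exp_neg_sq_div_le {t : ℝ} (ht : 0 < t) (x : ℝ) :
    |x| * exp (-x ^ 2 / (2 * t)) ≤ √t := by
  rw [← abs_of_pos (exp_pos (-x ^ 2 / (2 * t))), ← abs_mul]
  refine abs_le_sqrt ?_
  have h := add_one_le_exp (x ^ 2 / t)
  have e : exp (-x ^ 2 / (2 * t)) ^ 2 * exp (x ^ 2 / t) = 1 := by
    rw [← exp_nat_mul, ← exp_add]; push_cast; field_simp; simp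
  rw [div_add_one ht.ne', div_le_iff₀ ht] at h
  nlinarith [exp_pos (-x ^ 2 / (2 * t)), sq_nonneg x, pow_pos (exp_pos (-x ^ 2 / (2 * t))) 2]

theorem abs_heatK_sub_le {t : ℝ} (ht : 0 < t) (x y : ℝ) :
    |heatK t x - heatK t y| ≤ |x - y| / (2 * t) := by
  have hbound (z : ℝ) : ‖-(z / t) * heatK t z‖ ≤ 1 / (2 * t) := by
    rw [norm_mul, norm_neg, Real.norm_eq_abs, Real.norm_eq_abs, abs_div, abs_of_pos ht,
      abs_of_nonneg (heatK_nonneg t z), heatK, sqrt_mul (by positivity), ← mul_div_assoc,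
      div_mul_eq_mul_div, div_div, div_le_div_iff₀ (by positivity) (by positivity)]
    have := abs_mul_exp_neg_sq_div_le ht z
    have hs := sqrt_pos.mpr ht
    nlinarith [mul_le_mul_of_nonneg_left
      (mul_le_mul_of_nonneg_right two_le_sqrt_two_pi hs.le) ht.le]
  have := convex_univ.norm_image_sub_le_of_norm_hasDerivWithin_le
    (fun z _ => (hasDerivAt_heatK t z).hasDerivWithinAt) (fun z _ => hbound z)
    (Set.mem_univ y) (Set.mem_univ x)
  rw [Real.norm_eq_abs, Real.norm_eq_abs] at this
  linarith [show 1 / (2 * t) * |x - y| = |x - y| / (2 * t) by ring]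

theorem choose_div_two_pow_eq (k l : ℕ) :
    ((k + l).choose k : ℝ) / 2 ^ (k + l) = (k + l)! / (k ! * l ! * 2 ^ (k + l)) := by
  rw [Nat.cast_choose ℝ (Nat.le_add_right k l), Nat.add_sub_cancel_left, div_div]

theorem choose_div_two_pow_le_stirlingApprox {k l : ℕ} (hk : k ≠ 0) (hl : l ≠ 0) :
    ((k + l).choose k : ℝ) / 2 ^ (k + l) ≤
      stirlingApprox (k + l) / (stirlingApprox k * stirlingApprox l * 2 ^ (k + l)) *
        exp (1 / (12 * (k + l))) := by
  rw [choose_div_two_pow_eq, div_mul_eq_mul_div]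
  refine div_le_div₀ (mul_pos (stirlingApprox_pos (by omega)) (exp_pos _)).le ?_
    (mul_pos (mul_pos (stirlingApprox_pos hk) (stirlingApprox_pos hl)) (by positivity)) ?_
  · exact_mod_cast Stirling.factorial_le_stirling_mul_exp (by omega : k + l ≠ 0)
  · exact mul_le_mul_of_nonneg_right (mul_le_mul (Stirling.le_factorial_stirling k)
      (Stirling.le_factorial_stirling l) (stirlingApprox_pos hl).le (by positivity)) (by positivity)

theorem stirlingApprox_mul_exp_le_choose_div_two_pow {k l : ℕ} (hk : k ≠ 0) (hl : l ≠ 0) :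
    stirlingApprox (k + l) / (stirlingApprox k * stirlingApprox l * 2 ^ (k + l)) *
        exp (-(1 / (12 * k) + 1 / (12 * l))) ≤
      ((k + l).choose k : ℝ) / 2 ^ (k + l) := by
  have hA : stirlingApprox (k + l) / (stirlingApprox k * stirlingApprox l * 2 ^ (k + l)) *
      exp (-(1 / (12 * k) + 1 / (12 * l))) = stirlingApprox (k + l) /
        (stirlingApprox k * exp (1 / (12 * k)) * (stirlingApprox l * exp (1 / (12 * l))) *
          2 ^ (k + l)) := by
    rw [exp_neg, exp_add]; field_simp
  rw [hA, choose_div_two_pow_eq]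
  refine div_le_div₀ (by positivity) ?_ (by positivity) ?_
  · exact_mod_cast Stirling.le_factorial_stirling (k + l)
  · exact mul_le_mul_of_nonneg_right (mul_le_mul (Stirling.factorial_le_stirling_mul_exp hk)
      (Stirling.factorial_le_stirling_mul_exp hl) (by positivity)
      (mul_pos (stirlingApprox_pos hk) (exp_pos _)).le) (by positivity)

theorem choose_div_two_pow_le_two_mul_heatK_mul_exp {k l : ℕ} (hk : k ≠ 0) (hl : l ≠ 0)
    (hx : (((k : ℝ) - l) / (k + l)) ^ 2 ≤ 1 / 2) :
    ((k + l).choose k : ℝ) / 2 ^ (k + l) ≤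
      2 * heatK (k + l) (k - l) * exp ((((k : ℝ) - l) / (k + l)) ^ 2 + 1 / (12 * (k + l))) := by
  set x := ((k : ℝ) - l) / (k + l)
  have hx1 : |x| < 1 := by rw [← abs_one, ← sq_lt_sq, one_pow]; linarith
  calc ((k + l).choose k : ℝ) / 2 ^ (k + l)
      ≤ 2 / √(2 * π * (k + l)) / √(1 - x ^ 2) * exp (-((k + l) * klHalf x)) *
          exp (1 / (12 * (k + l))) := by
        rw [← stirlingApprox_add_div hk hl]
        exact choose_div_two_pow_le_stirlingApprox hk hl
    _ ≤ 2 / √(2 * π * (k + l)) / exp (-x ^ 2) * exp (-((k + l) * (x ^ 2 / 2))) *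
          exp (1 / (12 * (k + l))) := by
        gcongr
        · exact exp_neg_sq_le_sqrt_one_sub_sq hx
        · exact sq_div_two_le_klHalf hx1
    _ = _ := by
        rw [two_mul_heatK_add_sub, exp_add, exp_neg (x ^ 2)]
        field_simp
        congr 1
        simp only [x]
        field_simp

theorem two_mul_heatK_mul_exp_le_choose_div_two_pow {k l : ℕ} (hk : k ≠ 0) (hl : l ≠ 0)
    (hx : (((k : ℝ) - l) / (k + l)) ^ 2 ≤ 1 / 2) :
    2 * heatK (k + l) (k - l) *
        exp (-(((k : ℝ) + l) * (((k : ℝ) - l) / (k + l)) ^ 4 + 1 / (12 * k) + 1 / (12 * l))) ≤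
      ((k + l).choose k : ℝ) / 2 ^ (k + l) := by
  set x := ((k : ℝ) - l) / (k + l)
  calc 2 * heatK (k + l) (k - l) * exp (-((k + l) * x ^ 4 + 1 / (12 * k) + 1 / (12 * l)))
      = 2 / √(2 * π * (k + l)) / 1 * exp (-((k + l) * (x ^ 2 / 2 + x ^ 4))) *
          exp (-(1 / (12 * k) + 1 / (12 * l))) := by
        rw [two_mul_heatK_add_sub, div_one]
        simp only [mul_assoc, ← exp_add, x]
        ring_nf
    _ ≤ 2 / √(2 * π * (k + l)) / √(1 - x ^ 2) * exp (-((k + l) * klHalf x)) *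
          exp (-(1 / (12 * k) + 1 / (12 * l))) := by
        gcongr
        · exact sqrt_pos.mpr (by nlinarith)
        · exact sqrt_le_one.mpr (by nlinarith)
        · exact klHalf_le hx
    _ ≤ ((k + l).choose k : ℝ) / 2 ^ (k + l) := by
        rw [← stirlingApprox_add_div hk hl]
        exact stirlingApprox_mul_exp_le_choose_div_two_pow hk hl

theorem abs_sub_le_of_exp_bounds {a b d : ℝ} (hb : 0 ≤ b) (hd : 0 ≤ d) (hd1 : d ≤ 1)
    (hlo : b * exp (-d) ≤ a) (hhi : a ≤ b * exp d) : |a - b| ≤ 2 * d * b := by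
  have hd' : |d| ≤ 1 := by rwa [abs_of_nonneg hd]
  have h1 := (abs_le.mp (abs_exp_sub_one_le hd')).2
  have h2 := (abs_le.mp (abs_exp_sub_one_le (x := -d) (by rwa [abs_neg]))).1
  rw [abs_neg, abs_of_nonneg hd] at h2
  rw [abs_of_nonneg hd] at h1
  rw [abs_le]
  constructor <;> nlinarith

theorem sq_div_le_and_mul_pow_four_le {m y : ℝ} (hm : 1 ≤ m) (h : y ^ 8 ≤ m ^ 5) :
    (y / m) ^ 2 ≤ 1 / √m ∧ m * (y / m) ^ 4 ≤ 1 / √m := by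
  set s := √m
  have hs : 1 ≤ s := one_le_sqrt.mpr hm
  have hsm : s ^ 2 = m := sq_sqrt (by positivity)
  have h8 : (y / m) ^ 8 ≤ 1 / s ^ 6 := by
    rw [div_pow, div_le_div_iff₀ (by positivity) (by positivity),
      show s ^ 6 = m ^ 3 by rw [← hsm]; ring]
    nlinarith [pow_pos (by positivity : 0 < m) 3]
  constructor
  · refine (pow_le_pow_iff_left₀ (by positivity) (by positivity) (by norm_num : 4 ≠ 0)).mp ?_
    calc ((y / m) ^ 2) ^ 4 = (y / m) ^ 8 := by ring
      _ ≤ 1 / s ^ 6 := h8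
      _ ≤ (1 / s) ^ 4 := by
        rw [one_div_pow]
        exact one_div_le_one_div_of_le (by positivity) (pow_le_pow_right₀ hs (by norm_num))
  · refine (pow_le_pow_iff_left₀ (by positivity) (by positivity) (by norm_num : 2 ≠ 0)).mp ?_
    calc (m * (y / m) ^ 4) ^ 2 = s ^ 4 * (y / m) ^ 8 := by rw [← hsm]; ring
      _ ≤ s ^ 4 * (1 / s ^ 6) := by gcongr
      _ = (1 / s) ^ 2 := by field_simp

theorem abs_choose_div_two_pow_sub_le {k l : ℕ} (hm : 16 ≤ k + l)
    (h : ((k : ℝ) - l) ^ 8 ≤ ((k : ℝ) + l) ^ 5) :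
    |((k + l).choose k : ℝ) / 2 ^ (k + l) - 2 * heatK (k + l) (k - l)| ≤ 4 / (k + l) := by
  set m : ℝ := k + l
  set x := ((k : ℝ) - l) / m
  set s := √m
  have hm' : 16 ≤ m := by simp only [m]; exact_mod_cast hm
  have hsm : s ^ 2 = m := sq_sqrt (by positivity)
  have hs : 4 ≤ s := le_sqrt_of_sq_le (by linarith)
  obtain ⟨hx2, hx4⟩ := sq_div_le_and_mul_pow_four_le (by linarith) h
  have hxq : x ^ 2 ≤ 1 / 4 := hx2.trans (by gcongr)
  have hxm : x * m = k - l := div_mul_cancel₀ _ (by positivity)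
  obtain ⟨hx_lo, hx_hi⟩ :=
    abs_le_of_sq_le_sq' (by linarith : x ^ 2 ≤ (1 / 2) ^ 2) (by norm_num)
  have hk : m / 4 ≤ k := by nlinarith
  have hl : m / 4 ≤ l := by nlinarith
  have hk0 : k ≠ 0 := by rintro rfl; push_cast at hk; linarith
  have hl0 : l ≠ 0 := by rintro rfl; push_cast at hl; linarith
  have hH : 2 * heatK m (k - l) ≤ 1 / s :=
    (two_mul_heatK_le (by positivity) _).trans (div_le_div_of_nonneg_right
      (exp_le_one_iff.mpr (by rw [neg_div]; exact neg_nonpos.mpr (by positivity))) (by positivity))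
  have hH0 : 0 ≤ 2 * heatK m (k - l) := mul_nonneg zero_le_two (heatK_nonneg _ _)
  have hs_m : s ≤ m := by nlinarith
  have hkinv : 1 / (12 * (k : ℝ)) ≤ 1 / s / 2 := by
    rw [div_div, div_le_div_iff₀ (by positivity) (by positivity)]; linarith
  have hlinv : 1 / (12 * (l : ℝ)) ≤ 1 / s / 2 := by
    rw [div_div, div_le_div_iff₀ (by positivity) (by positivity)]; linarith
  have hminv : 1 / (12 * m) ≤ 1 / s := by
    rw [div_le_div_iff₀ (by positivity) (by positivity)]; linarith
  have htwo : 2 / s = 1 / s + 1 / s := by ring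
  have hup : x ^ 2 + 1 / (12 * m) ≤ 2 / s := by linarith
  have hlo : m * x ^ 4 + 1 / (12 * k) + 1 / (12 * l) ≤ 2 / s := by linarith
  calc |((k + l).choose k : ℝ) / 2 ^ (k + l) - 2 * heatK m (k - l)|
      ≤ 2 * (2 / s) * (2 * heatK m (k - l)) := by
        refine abs_sub_le_of_exp_bounds hH0 (by positivity)
          (by rw [div_le_one (by positivity)]; linarith) ?_ ?_
        · refine le_trans ?_ (two_mul_heatK_mul_exp_le_choose_div_two_pow hk0 hl0 (by linarith))
          gcongr
        · refine (choose_div_two_pow_le_two_mul_heatK_mul_exp hk0 hl0 (by linarith)).trans ?_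
          gcongr
    _ ≤ 2 * (2 / s) * (1 / s) := by gcongr
    _ = 4 / m := by rw [← hsm]; ring

theorem rwG_nonneg (m : ℕ) (n : ℤ) : 0 ≤ rwG m n := by unfold rwG; positivity

theorem sum_ite_one_neg_one_eq (m : ℕ) (f : Fin m → Bool) :
    (∑ i, if f i then (1 : ℤ) else -1) = 2 * (Finset.univ.filter fun i => f i).card - m := by
  have h (i : Fin m) : (if f i then (1 : ℤ) else -1) = 2 * (if f i then 1 else 0) - 1 := by
    split_ifs <;> norm_num
  rw [Finset.sum_congr rfl fun i _ => h i, Finset.sum_sub_distrib, ← Finset.mul_sum,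
    Finset.sum_boole]
  simp

theorem card_filter_card_filter_eq_choose (m k : ℕ) :
    (Finset.univ.filter fun f : Fin m → Bool => (Finset.univ.filter fun i => f i).card = k).card =
      m.choose k := by
  conv_rhs => rw [← Fintype.card_fin m, ← Finset.card_univ, ← Finset.card_powersetCard]
  refine Finset.card_nbij' (fun f => Finset.univ.filter fun i => f i) (fun s i => i ∈ s)
    ?_ ?_ ?_ ?_ <;> intro a ha <;> simp_all [Finset.mem_powersetCard]

theorem rwG_add_sub (k l : ℕ) :
    rwG (k + l) ((k : ℤ) - l) = ((k + l).choose k : ℝ) / 2 ^ (k + l) := by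
  rw [rwG, ← card_filter_card_filter_eq_choose]
  congr 3
  ext f
  simp only [Finset.mem_filter, Finset.mem_univ, true_and, sum_ite_one_neg_one_eq]
  push_cast
  omega

theorem exists_add_eq_and_sub_eq {m : ℕ} {n : ℤ} (hmn : Even ((m : ℤ) + n)) (hn : |n| ≤ m) :
    ∃ k l : ℕ, k + l = m ∧ (k : ℤ) - l = n := by
  obtain ⟨c, hc⟩ := hmn
  obtain ⟨hn₁, hn₂⟩ := abs_le.mp hn
  exact ⟨c.toNat, (c - n).toNat, by omega, by omega⟩

theorem sum_exp_mul_sum_ite_one_neg_one (m : ℕ) (t : ℝ) :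
    ∑ f : Fin m → Bool, exp (t * ((∑ i, if f i then (1 : ℤ) else -1 : ℤ) : ℝ)) =
      (2 * cosh t) ^ m := by
  simp_rw [Int.cast_sum, Finset.mul_sum, exp_sum]
  rw [← Fintype.prod_sum fun (_ : Fin m) (b : Bool) =>
    exp (t * ((if b then (1 : ℤ) else -1 : ℤ) : ℝ))]
  simp [cosh_eq]
  ring

theorem rwG_mul_exp_le (m : ℕ) (n : ℤ) (t : ℝ) :
    rwG m n * exp (t * n) ≤ exp (m * t ^ 2 / 2) := by
  calc rwG m n * exp (t * n)
      = (∑ f ∈ Finset.univ.filter fun f : Fin m → Bool =>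
          (∑ i, if f i then (1 : ℤ) else -1) = n,
          exp (t * ((∑ i, if f i then (1 : ℤ) else -1 : ℤ) : ℝ))) / 2 ^ m := by
        rw [rwG, div_mul_eq_mul_div, Finset.card_eq_sum_ones, Nat.cast_sum, Finset.sum_mul]
        congr 1
        refine Finset.sum_congr rfl fun f hf => ?_
        rw [(Finset.mem_filter.mp hf).2]
        simp
    _ ≤ (∑ f : Fin m → Bool,
          exp (t * ((∑ i, if f i then (1 : ℤ) else -1 : ℤ) : ℝ))) / 2 ^ m := by
        gcongr
        exact Finset.subset_univ _
    _ = cosh t ^ m := by rw [sum_exp_mul_sum_ite_one_neg_one, mul_pow]; field_simp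
    _ ≤ exp (t ^ 2 / 2) ^ m := pow_le_pow_left₀ (cosh_pos t).le (cosh_le_exp_half_sq t) m
    _ = exp (m * t ^ 2 / 2) := by rw [← exp_nat_mul]; ring_nf

theorem rwG_le_exp {m : ℕ} (hm : m ≠ 0) (n : ℤ) : rwG m n ≤ exp (-n ^ 2 / (2 * m)) := by
  have h := rwG_mul_exp_le m n (n / m)
  rw [← le_div_iff₀ (exp_pos _), ← exp_sub] at h
  have hm' : (m : ℝ) ≠ 0 := by exact_mod_cast hm
  refine h.trans_eq (congrArg exp ?_)
  field_simp
  ring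

theorem abs_rwG_sub_two_mul_heatK_le_of_pow_le {m : ℕ} {n : ℤ} (hm : 16 ≤ m)
    (hmn : Even ((m : ℤ) + n)) (h : n ^ 8 ≤ (m : ℤ) ^ 5) :
    |rwG m n - 2 * heatK m n| ≤ 4 / m := by
  have hn : |n| ≤ m := by
    by_contra! hlt
    have : (m : ℤ) ^ 5 < (m : ℤ) ^ 8 := pow_lt_pow_right₀ (by omega) (by norm_num)
    have : (m : ℤ) ^ 8 ≤ n ^ 8 :=
      (pow_le_pow_left₀ (by positivity) hlt.le 8).trans_eq (Even.pow_abs (by decide) n)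
    omega
  obtain ⟨k, l, rfl, rfl⟩ := exists_add_eq_and_sub_eq hmn hn
  rw [rwG_add_sub]
  push_cast at h ⊢
  exact abs_choose_div_two_pow_sub_le hm (by exact_mod_cast h)

theorem abs_rwG_sub_two_mul_heatK_le_exp {m : ℕ} (hm : m ≠ 0) (n : ℤ) :
    |rwG m n - 2 * heatK m n| ≤ exp (-n ^ 2 / (2 * m)) := by
  have hm' : (1 : ℝ) ≤ m := by exact_mod_cast Nat.one_le_iff_ne_zero.mpr hm
  refine abs_sub_le_of_nonneg_of_le (rwG_nonneg m n) (rwG_le_exp hm n)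
    (mul_nonneg zero_le_two (heatK_nonneg _ _)) ((two_mul_heatK_le (by positivity) _).trans ?_)
  exact div_le_self (exp_pos _).le (one_le_sqrt.mpr hm')

theorem exp_neg_sq_div_le_of_pow_le {t y : ℝ} (ht : 0 < t) (h : t ^ 5 ≤ y ^ 8) :
    exp (-y ^ 2 / (2 * t)) ≤ 384 / t := by
  set u := y ^ 2 / (2 * t)
  have hu : u ^ 4 / 24 ≤ exp u := by
    simpa [Nat.factorial] using pow_div_factorial_le_exp u (by positivity) 4
  have hy : y ^ 8 = 16 * t ^ 4 * u ^ 4 := by simp only [u]; field_simp; ring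
  rw [neg_div, exp_neg, ← one_div, div_le_div_iff₀ (exp_pos _) ht, one_mul]
  refine le_of_mul_le_mul_left ?_ (pow_pos ht 4)
  nlinarith [pow_pos ht 4]

theorem abs_rwG_sub_two_mul_heatK_le {m : ℕ} (hm : m ≠ 0) {n : ℤ}
    (hmn : Even ((m : ℤ) + n)) :
    |rwG m n - 2 * heatK m n| ≤ 384 / m := by
  have ht : (0 : ℝ) < m := by positivity
  by_cases hc : 16 ≤ m ∧ n ^ 8 ≤ (m : ℤ) ^ 5
  · exact (abs_rwG_sub_two_mul_heatK_le_of_pow_le hc.1 hmn hc.2).trans (by gcongr; norm_num)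
  refine (abs_rwG_sub_two_mul_heatK_le_exp hm n).trans ?_
  rcases not_and_or.mp hc with hsmall | htail
  · refine (exp_le_one_iff.mpr (div_nonpos_of_nonpos_of_nonneg (neg_nonpos.mpr (sq_nonneg _))
      (by positivity))).trans ?_
    rw [le_div_iff₀ ht, one_mul]
    exact_mod_cast (not_le.mp hsmall).le.trans (by norm_num)
  · exact exp_neg_sq_div_le_of_pow_le ht (by exact_mod_cast (not_le.mp htail).le)

/-- **Local limit theorem for the simple random walk.**
There is a constant `C > 0` such that for every `m ≥ 1`, every integer `n` with `m + n`
even, and every real `z ∈ [n - 2, n + 2]`, one has `|G(m,n) − 2 p_m(z)| ≤ C/m`. -/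
theorem local_limit_theorem :
    ∃ C > 0, ∀ m : ℕ, 1 ≤ m → ∀ n : ℤ, Even ((m : ℤ) + n) →
      ∀ z : ℝ, (n : ℝ) - 2 ≤ z → z ≤ (n : ℝ) + 2 →
        |rwG m n - 2 * heatK m z| ≤ C / m := by
  refine ⟨386, by norm_num, fun m hm n hmn z hz₁ hz₂ => ?_⟩
  have ht : (0 : ℝ) < m := by exact_mod_cast hm
  have hshift : |heatK m n - heatK m z| ≤ 1 / m := by
    refine (abs_heatK_sub_le ht n z).trans ?_
    have hz : |(n : ℝ) - z| ≤ 2 := abs_le.mpr ⟨by linarith, by linarith⟩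
    rw [div_le_div_iff₀ (by positivity) ht]
    nlinarith
  calc |rwG m n - 2 * heatK m z|
      ≤ |rwG m n - 2 * heatK m n| + 2 * |heatK m n - heatK m z| := by
        rw [← abs_two, ← abs_mul, abs_two, mul_sub]
        exact abs_sub_le _ _ _
    _ ≤ 384 / m + 2 * (1 / m) := by
        gcongr
        exact abs_rwG_sub_two_mul_heatK_le (by omega) hmn
    _ = 386 / m := by ring
end
end

section
/- Fix H ∈ (1/2, 1). There exists a constant C > 0, depending only on H, such that for every T > 0 and every measurable function f : ℝ → ℝ that vanishes outside [0, T] and satisfies ∫_0^T |f(s)|^{1/H} ds < ∞, one has H(2H-1) ∫_ℝ ∫_ℝ |t - s|^{2H-2} |f(s)| |f(t)| ds dt ≤ C ( ∫_0^T |f(s)|^{1/H} ds )^{2H}. -/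
/-!
Decompose `|f|` dyadically: on `E k = {2 ^ k < |f| ≤ 2 ^ (k + 1)}` it is comparable to `2 ^ k`.
The kernel `|t - s| ^ (2H - 2)` integrates over any set `F` to at most `c |F| ^ (2H - 1)`, the
worst case being an interval centred at `s`; hence the block `E j × E k` with `j ≥ k` contributes
at most `c 2 ^ (j + k) |E j| |E k| ^ (2H - 1)`. In terms of `X k = 2 ^ (k / H) |E k|`, whose sum is
at most `∫ |f| ^ (1 / H)` by Chebyshev, this is `X j X k ^ (2H - 1) 2 ^ ((1 - 1 / H) (j - k))`, and
summing the geometric factor over `j - k` leaves `(∑ X k) ^ (2H)`.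
-/

open MeasureTheory Set
open scoped ENNReal

section RieszKernel

variable {α : ℝ}

lemma lintegral_Icc_abs_rpow (hα : -1 < α) {R : ℝ} (hR : 0 ≤ R) :
    ∫⁻ x in Icc 0 R, ENNReal.ofReal (|x| ^ α) = ENNReal.ofReal (R ^ (α + 1) / (α + 1)) := by
  have hint : IntegrableOn (fun x : ℝ => x ^ α) (Ioc 0 R) :=
    (intervalIntegral.intervalIntegrable_rpow' hα).1
  rw [← setLIntegral_congr Ioc_ae_eq_Icc,
    setLIntegral_congr_fun measurableSet_Ioc fun x hx => by rw [abs_of_pos hx.1],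
    ← ofReal_integral_eq_lintegral_ofReal hint
      ((ae_restrict_iff' measurableSet_Ioc).2 (.of_forall fun x hx => Real.rpow_nonneg hx.1.le α)),
    ← intervalIntegral.integral_of_le hR, integral_rpow (.inl hα),
    Real.zero_rpow (by linarith), sub_zero]

lemma lintegral_Icc_abs_sub_rpow_le (hα : -1 < α) (s : ℝ) {R : ℝ} (hR : 0 ≤ R) :
    ∫⁻ t in Icc (s - R) (s + R), ENNReal.ofReal (|t - s| ^ α) ≤
      ENNReal.ofReal (2 / (α + 1)) * ENNReal.ofReal R ^ (α + 1) := by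
  have right : ∫⁻ t in Icc s (s + R), ENNReal.ofReal (|t - s| ^ α) =
      ∫⁻ x in Icc 0 R, ENNReal.ofReal (|x| ^ α) := by
    rw [← (measurePreserving_add_right volume s).setLIntegral_comp_preimage_emb
      (measurableEmbedding_addRight s), preimage_add_const_Icc]
    simp
  have left : ∫⁻ t in Icc (s - R) s, ENNReal.ofReal (|t - s| ^ α) =
      ∫⁻ x in Icc 0 R, ENNReal.ofReal (|x| ^ α) := by
    rw [← (Measure.measurePreserving_sub_left volume s).setLIntegral_comp_preimage_emb
      (measurableEmbedding_subLeft s), preimage_const_sub_Icc]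
    simp
  calc ∫⁻ t in Icc (s - R) (s + R), ENNReal.ofReal (|t - s| ^ α)
      = ∫⁻ t in Icc (s - R) s ∪ Icc s (s + R), ENNReal.ofReal (|t - s| ^ α) := by
        rw [Icc_union_Icc_eq_Icc (by linarith) (by linarith)]
    _ ≤ 2 * ENNReal.ofReal (R ^ (α + 1) / (α + 1)) := by
        refine (lintegral_union_le _ _ _).trans_eq ?_
        rw [left, right, lintegral_Icc_abs_rpow hα hR, two_mul]
    _ = ENNReal.ofReal (2 / (α + 1)) * ENNReal.ofReal R ^ (α + 1) := by
        rw [ENNReal.ofReal_rpow_of_nonneg hR (by linarith), ← ENNReal.ofReal_ofNat 2,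
          ← ENNReal.ofReal_mul zero_le_two,
          ← ENNReal.ofReal_mul (div_nonneg zero_le_two (by linarith))]
        ring_nf

lemma setLIntegral_abs_sub_rpow_le (hα : -1 < α) (hα0 : α ≤ 0) (s : ℝ) (F : Set ℝ) :
    ∫⁻ t in F, ENNReal.ofReal (|t - s| ^ α) ≤
      (ENNReal.ofReal (2 / (α + 1)) + 1) * volume F ^ (α + 1) := by
  rcases eq_or_ne (volume F) 0 with hzero | hzero
  · simp [Measure.restrict_eq_zero.2 hzero]
  rcases eq_or_ne (volume F) ⊤ with htop | htop
  · rw [htop, ENNReal.top_rpow_of_pos (by linarith), ENNReal.mul_top (by simp)]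
    exact le_top
  set R := (volume F).toReal
  have hR : 0 < R := ENNReal.toReal_pos hzero htop
  have hvol : ENNReal.ofReal R = volume F := ENNReal.ofReal_toReal htop
  -- Near `s` integrate the kernel exactly; away from `s` it is at most `R ^ α`.
  have split : ∀ t, ENNReal.ofReal (|t - s| ^ α) ≤
      (Icc (s - R) (s + R)).indicator (fun t => ENNReal.ofReal (|t - s| ^ α)) t +
        ENNReal.ofReal (R ^ α) := by
    intro t
    by_cases ht : t ∈ Icc (s - R) (s + R)
    · rw [indicator_of_mem ht]
      exact le_self_add
    · rw [indicator_of_notMem ht, zero_add]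
      refine ENNReal.ofReal_le_ofReal (Real.rpow_le_rpow_of_nonpos hR ?_ hα0)
      rw [mem_Icc, not_and_or, not_le, not_le] at ht
      rcases ht with ht | ht
      · rw [abs_of_neg (by linarith)]; linarith
      · rw [abs_of_pos (by linarith)]; linarith
  calc ∫⁻ t in F, ENNReal.ofReal (|t - s| ^ α)
      ≤ ∫⁻ t in F, ((Icc (s - R) (s + R)).indicator (fun t => ENNReal.ofReal (|t - s| ^ α)) t +
          ENNReal.ofReal (R ^ α)) := lintegral_mono split
    _ ≤ (∫⁻ t in Icc (s - R) (s + R), ENNReal.ofReal (|t - s| ^ α)) +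
          ENNReal.ofReal (R ^ α) * volume F := by
        rw [lintegral_add_right _ measurable_const, setLIntegral_const]
        gcongr ?_ + _
        rw [← lintegral_indicator measurableSet_Icc]
        exact setLIntegral_le_lintegral _ _
    _ ≤ ENNReal.ofReal (2 / (α + 1)) * volume F ^ (α + 1) + volume F ^ (α + 1) := by
        have tail : ENNReal.ofReal (R ^ α) * volume F = volume F ^ (α + 1) := by
          rw [← hvol, ← ENNReal.ofReal_mul (by positivity), ← Real.rpow_add_one hR.ne',
            ENNReal.ofReal_rpow_of_pos hR]
        rw [tail, ← hvol]
        gcongr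
        exact lintegral_Icc_abs_sub_rpow_le hα s hR.le
    _ = (ENNReal.ofReal (2 / (α + 1)) + 1) * volume F ^ (α + 1) := by ring

lemma lintegral_lintegral_abs_sub_rpow_le (hα : -1 < α) (hα0 : α ≤ 0) (E F : Set ℝ) :
    ∫⁻ s in E, ∫⁻ t in F, ENNReal.ofReal (|t - s| ^ α) ≤
      (ENNReal.ofReal (2 / (α + 1)) + 1) * (volume E * volume F ^ (α + 1)) :=
  calc ∫⁻ s in E, ∫⁻ t in F, ENNReal.ofReal (|t - s| ^ α)
      ≤ ∫⁻ _ in E, (ENNReal.ofReal (2 / (α + 1)) + 1) * volume F ^ (α + 1) :=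
        lintegral_mono fun s => setLIntegral_abs_sub_rpow_le hα hα0 s F
    _ = _ := by rw [setLIntegral_const]; ring

lemma lintegral_lintegral_abs_sub_rpow_add_swap_le (hα : -1 < α) (hα0 : α ≤ 0) (E F : Set ℝ) :
    (∫⁻ s in E, ∫⁻ t in F, ENNReal.ofReal (|t - s| ^ α)) +
        ∫⁻ s in F, ∫⁻ t in E, ENNReal.ofReal (|t - s| ^ α) ≤
      2 * (ENNReal.ofReal (2 / (α + 1)) + 1) * (volume E * volume F ^ (α + 1)) := by
  have swap : ∫⁻ s in F, ∫⁻ t in E, ENNReal.ofReal (|t - s| ^ α) =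
      ∫⁻ s in E, ∫⁻ t in F, ENNReal.ofReal (|t - s| ^ α) := by
    rw [lintegral_lintegral_swap (by fun_prop)]
    simp only [abs_sub_comm]
  rw [swap, ← two_mul, mul_assoc]
  gcongr
  exact lintegral_lintegral_abs_sub_rpow_le hα hα0 E F

end RieszKernel

lemma ENNReal.tsum_int_prod_le (a : ℤ × ℤ → ℝ≥0∞) :
    ∑' q, a q ≤ ∑' x : ℕ × ℤ, (a (x.2 + x.1, x.2) + a (x.2, x.2 + x.1)) := by
  let φ : (ℕ × ℤ) ⊕ (ℕ × ℤ) → ℤ × ℤ :=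
    Sum.elim (fun x => (x.2 + x.1, x.2)) (fun x => (x.2, x.2 + x.1))
  have hφ : Function.Surjective φ := by
    rintro ⟨i, j⟩
    rcases le_total j i with h | h
    · exact ⟨.inl ((i - j).toNat, j), by simp [φ]; omega⟩
    · exact ⟨.inr ((j - i).toNat, i), by simp [φ]; omega⟩
  calc ∑' q, a q ≤ ∑' y, a (φ y) := ENNReal.tsum_le_tsum_comp_of_surjective hφ a
    _ = _ := by rw [ENNReal.summable.tsum_sum ENNReal.summable, ← ENNReal.tsum_add]; rfl

lemma ENNReal.tsum_shift_mul_rpow_mul_pow_le (X : ℤ → ℝ≥0∞) {γ : ℝ} (hγ : 0 ≤ γ) (δ : ℝ≥0∞) :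
    ∑' x : ℕ × ℤ, X (x.2 + x.1) * X x.2 ^ γ * δ ^ x.1 ≤ (1 - δ)⁻¹ * (∑' k, X k) ^ (1 + γ) := by
  set S := ∑' k, X k
  have inner (d : ℕ) : ∑' k : ℤ, X (k + d) * X k ^ γ * δ ^ d ≤ δ ^ d * S ^ (1 + γ) :=
    calc ∑' k : ℤ, X (k + d) * X k ^ γ * δ ^ d
        ≤ ∑' k : ℤ, X (k + d) * S ^ γ * δ ^ d := by
          gcongr with k
          exact ENNReal.le_tsum k
      _ = S * S ^ γ * δ ^ d := by
          rw [ENNReal.tsum_mul_right, ENNReal.tsum_mul_right,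
            show ∑' k : ℤ, X (k + d) = S from (Equiv.addRight (d : ℤ)).tsum_eq X]
      _ = δ ^ d * S ^ (1 + γ) := by
          rw [ENNReal.rpow_add_of_nonneg _ _ zero_le_one hγ, ENNReal.rpow_one]; ring
  calc ∑' x : ℕ × ℤ, X (x.2 + x.1) * X x.2 ^ γ * δ ^ x.1
      ≤ ∑' d : ℕ, δ ^ d * S ^ (1 + γ) := by
        rw [ENNReal.tsum_prod']
        exact ENNReal.tsum_le_tsum inner
    _ = (1 - δ)⁻¹ * S ^ (1 + γ) := by rw [ENNReal.tsum_mul_right, ENNReal.tsum_geometric]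

section DoubleIntegral

variable {X : Type*} [MeasurableSpace X] {μ : Measure X} [SFinite μ] {κ : X → X → ℝ≥0∞}

lemma lintegral_lintegral_mul_le_tsum {ι : Type*} [Countable ι]
    (hκ : Measurable (Function.uncurry κ)) {g : X → ℝ≥0∞} {h : ι → X → ℝ≥0∞}
    (hh : ∀ i, Measurable (h i)) (hg : ∀ x, g x ≤ ∑' i, h i x) :
    ∫⁻ s, ∫⁻ t, κ s t * g s * g t ∂μ ∂μ ≤
      ∑' q : ι × ι, ∫⁻ s, ∫⁻ t, κ s t * h q.1 s * h q.2 t ∂μ ∂μ := by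
  have hmeas (q : ι × ι) : Measurable fun z : X × X => κ z.1 z.2 * h q.1 z.1 * h q.2 z.2 :=
    (hκ.mul ((hh q.1).comp measurable_fst)).mul ((hh q.2).comp measurable_snd)
  calc ∫⁻ s, ∫⁻ t, κ s t * g s * g t ∂μ ∂μ
      ≤ ∫⁻ s, ∫⁻ t, ∑' q : ι × ι, κ s t * h q.1 s * h q.2 t ∂μ ∂μ := by
        gcongr with s t
        calc κ s t * g s * g t ≤ κ s t * (∑' i, h i s) * ∑' j, h j t := by gcongr <;> apply hg
          _ = ∑' q : ι × ι, κ s t * h q.1 s * h q.2 t := by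
            rw [ENNReal.tsum_prod']
            simp only [ENNReal.tsum_mul_left, ENNReal.tsum_mul_right]
    _ = ∑' q : ι × ι, ∫⁻ s, ∫⁻ t, κ s t * h q.1 s * h q.2 t ∂μ ∂μ := by
        refine (lintegral_congr fun s => lintegral_tsum fun q =>
          ((hmeas q).comp measurable_prodMk_left).aemeasurable).trans ?_
        exact lintegral_tsum fun q => (hmeas q).lintegral_prod_right'.aemeasurable

lemma lintegral_lintegral_mul_indicator (hκ : Measurable (Function.uncurry κ)) {A B : Set X}
    (hA : MeasurableSet A) (hB : MeasurableSet B) (a b : ℝ≥0∞) :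
    ∫⁻ s, ∫⁻ t, κ s t * A.indicator (fun _ => a) s * B.indicator (fun _ => b) t ∂μ ∂μ =
      a * b * ∫⁻ s in A, ∫⁻ t in B, κ s t ∂μ ∂μ := by
  have inner (s : X) : ∫⁻ t, κ s t * A.indicator (fun _ => a) s * B.indicator (fun _ => b) t ∂μ =
      A.indicator (fun s => a * b * ∫⁻ t in B, κ s t ∂μ) s := by
    by_cases hs : s ∈ A
    · simp only [indicator_of_mem hs]
      have hκs : Measurable (κ s) := hκ.comp measurable_prodMk_left
      rw [← lintegral_indicator hB, ← lintegral_const_mul _ (hκs.indicator hB)]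
      congr 1 with t
      by_cases ht : t ∈ B
      · simp only [indicator_of_mem ht]; ring
      · simp [indicator_of_notMem ht]
    · simp [indicator_of_notMem hs]
  have hκB : Measurable fun s => ∫⁻ t in B, κ s t ∂μ := hκ.lintegral_prod_right'
  simp_rw [inner]
  rw [lintegral_indicator hA, lintegral_const_mul _ hκB]

end DoubleIntegral

lemma ENNReal.ofReal_two_zpow (k : ℤ) : ENNReal.ofReal (2 ^ k) = 2 ^ (k : ℝ) := by
  rw [← Real.rpow_intCast, ← ENNReal.ofReal_rpow_of_pos two_pos, ENNReal.ofReal_ofNat]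

section Dyadic

variable {X : Type*} {f : X → ℝ}

def dyadicLevelSet (f : X → ℝ) (k : ℤ) : Set X :=
  (fun x => |f x|) ⁻¹' Ioc (2 ^ k) (2 ^ (k + 1))

lemma pairwise_disjoint_dyadicLevelSet (f : X → ℝ) :
    Pairwise (Function.onFun Disjoint (dyadicLevelSet f)) :=
  fun _ _ hjk =>
    ((zpow_right_mono₀ one_le_two).pairwise_disjoint_on_Ioc_succ hjk).preimage _

lemma ofReal_abs_le_tsum_indicator_dyadicLevelSet (f : X → ℝ) (x : X) :
    ENNReal.ofReal |f x| ≤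
      ∑' k : ℤ, (dyadicLevelSet f k).indicator (fun _ => (2 : ℝ≥0∞) ^ ((k : ℝ) + 1)) x := by
  rcases (abs_nonneg (f x)).eq_or_lt with hx | hx
  · simp [← hx]
  obtain ⟨k, hk⟩ := exists_mem_Ioc_zpow hx one_lt_two
  refine le_trans ?_ (ENNReal.le_tsum k)
  rw [indicator_of_mem (show x ∈ dyadicLevelSet f k from hk)]
  calc ENNReal.ofReal |f x| ≤ ENNReal.ofReal (2 ^ (k + 1)) := ENNReal.ofReal_le_ofReal hk.2
    _ = 2 ^ ((k : ℝ) + 1) := by rw [ENNReal.ofReal_two_zpow]; push_cast; rfl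

variable [MeasurableSpace X]

lemma measurableSet_dyadicLevelSet (hf : Measurable f) (k : ℤ) :
    MeasurableSet (dyadicLevelSet f k) :=
  hf.abs measurableSet_Ioc

lemma tsum_two_rpow_mul_measure_dyadicLevelSet_le (hf : Measurable f) {p : ℝ} (hp : 0 ≤ p)
    (μ : Measure X) :
    ∑' k : ℤ, (2 : ℝ≥0∞) ^ ((k : ℝ) * p) * μ (dyadicLevelSet f k) ≤
      ∫⁻ x, ENNReal.ofReal (|f x| ^ p) ∂μ :=
  calc ∑' k : ℤ, (2 : ℝ≥0∞) ^ ((k : ℝ) * p) * μ (dyadicLevelSet f k)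
      ≤ ∑' k : ℤ, ∫⁻ x in dyadicLevelSet f k, ENNReal.ofReal (|f x| ^ p) ∂μ := by
        refine ENNReal.tsum_le_tsum fun k => ?_
        rw [← setLIntegral_const]
        refine setLIntegral_mono (by fun_prop) fun x hx => ?_
        rw [ENNReal.rpow_mul, ← ENNReal.ofReal_two_zpow,
          ← ENNReal.ofReal_rpow_of_nonneg (abs_nonneg _) hp]
        exact ENNReal.rpow_le_rpow (ENNReal.ofReal_le_ofReal hx.1.le) hp
    _ = ∫⁻ x in ⋃ k, dyadicLevelSet f k, ENNReal.ofReal (|f x| ^ p) ∂μ :=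
        (lintegral_iUnion (measurableSet_dyadicLevelSet hf)
          (pairwise_disjoint_dyadicLevelSet f) _).symm
    _ ≤ ∫⁻ x, ENNReal.ofReal (|f x| ^ p) ∂μ := setLIntegral_le_lintegral _ _

lemma lintegral_lintegral_mul_abs_le_tsum_dyadicLevelSet {μ : Measure X} [SFinite μ]
    {κ : X → X → ℝ≥0∞} (hκ : Measurable (Function.uncurry κ)) (hf : Measurable f) :
    ∫⁻ s, ∫⁻ t, κ s t * ENNReal.ofReal |f s| * ENNReal.ofReal |f t| ∂μ ∂μ ≤
      ∑' q : ℤ × ℤ, (2 : ℝ≥0∞) ^ ((q.1 : ℝ) + 1) * 2 ^ ((q.2 : ℝ) + 1) *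
        ∫⁻ s in dyadicLevelSet f q.1, ∫⁻ t in dyadicLevelSet f q.2, κ s t ∂μ ∂μ := by
  refine (lintegral_lintegral_mul_le_tsum hκ
    (fun k => measurable_const.indicator (measurableSet_dyadicLevelSet hf k))
    (ofReal_abs_le_tsum_indicator_dyadicLevelSet f)).trans_eq ?_
  congr with q
  exact lintegral_lintegral_mul_indicator hκ (measurableSet_dyadicLevelSet hf _)
    (measurableSet_dyadicLevelSet hf _) _ _

end Dyadic

lemma lintegral_ofReal_abs_rpow_eq_ofReal_setIntegral {X : Type*} [MeasurableSpace X]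
    {μ : Measure X} {f : X → ℝ} (hf : Measurable f) {p : ℝ} (hp : 0 < p) {S : Set X}
    (hsupp : ∀ x, x ∉ S → f x = 0) (hfin : ∫⁻ x in S, ENNReal.ofReal (|f x| ^ p) ∂μ ≠ ⊤) :
    ∫⁻ x, ENNReal.ofReal (|f x| ^ p) ∂μ = ENNReal.ofReal (∫ x in S, |f x| ^ p ∂μ) := by
  rw [integral_eq_lintegral_of_nonneg_ae (.of_forall fun x => by positivity)
      (hf.abs.pow_const _).aestronglyMeasurable, ENNReal.ofReal_toReal hfin]
  refine (setLIntegral_eq_of_support_subset fun x hx => ?_).symm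
  by_contra hxS
  simp [hsupp x hxS, Real.zero_rpow hp.ne'] at hx

-- The block weight `2 ^ (j + 1) * 2 ^ (k + 1)`, `j = k + d`, in the header's terms
-- `X j * X k ^ γ * 2 ^ ((1 - p) d)`; here `p = 1 / H` and `γ = 2H - 1`.
lemma two_rpow_add_one_mul_two_rpow_add_one {p γ : ℝ} (hpγ : p * γ = 2 - p) (k : ℤ) (d : ℕ) :
    (2 : ℝ≥0∞) ^ (((k + d : ℤ) : ℝ) + 1) * 2 ^ ((k : ℝ) + 1) =
      4 * (2 ^ (((k + d : ℤ) : ℝ) * p) * (2 ^ ((k : ℝ) * p)) ^ γ * (2 ^ (1 - p)) ^ d) := by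
  have h2 (x y : ℝ) : (2 : ℝ≥0∞) ^ x * 2 ^ y = 2 ^ (x + y) :=
    (ENNReal.rpow_add x y two_ne_zero ENNReal.ofNat_ne_top).symm
  rw [← ENNReal.rpow_mul, ← ENNReal.rpow_natCast, ← ENNReal.rpow_mul,
    show (4 : ℝ≥0∞) = 2 ^ (2 : ℝ) by norm_num, h2, h2, h2, h2]
  congr 1
  push_cast
  linear_combination (-(k : ℝ)) * hpγ

noncomputable def hlsConst (H : ℝ) : ℝ≥0∞ :=
  8 * (ENNReal.ofReal (2 / (2 * H - 1)) + 1) * (1 - 2 ^ (1 - 1 / H))⁻¹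

lemma hlsConst_ne_top {H : ℝ} (hH0 : 0 < H) (hH1 : H < 1) : hlsConst H ≠ ⊤ := by
  have hδ : (2 : ℝ≥0∞) ^ (1 - 1 / H) < 1 :=
    ENNReal.rpow_lt_one_of_one_lt_of_neg (by norm_num) (sub_neg.2 (one_lt_one_div hH0 hH1))
  exact ENNReal.mul_ne_top (by finiteness) (ENNReal.inv_ne_top.2 (tsub_pos_of_lt hδ).ne')

theorem lintegral_lintegral_abs_sub_rpow_mul_le {H : ℝ} (hH1 : 1 / 2 < H) (hH2 : H < 1)
    {f : ℝ → ℝ} (hf : Measurable f) :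
    ∫⁻ s, ∫⁻ t, ENNReal.ofReal (|t - s| ^ (2 * H - 2)) * ENNReal.ofReal |f s| *
        ENNReal.ofReal |f t| ≤ hlsConst H * (∫⁻ s, ENNReal.ofReal (|f s| ^ (1 / H))) ^ (2 * H) := by
  set γ := 2 * H - 1
  set p := 1 / H
  set c := ENNReal.ofReal (2 / γ) + 1
  set δ : ℝ≥0∞ := 2 ^ (1 - p)
  have hpγ : p * γ = 2 - p := by simp only [p, γ]; field_simp
  have hker (E F : Set ℝ) := lintegral_lintegral_abs_sub_rpow_add_swap_le (α := 2 * H - 2)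
    (by linarith) (by linarith) E F
  simp only [show 2 * H - 2 + 1 = γ by ring] at hker
  set E := dyadicLevelSet f
  set X : ℤ → ℝ≥0∞ := fun k => 2 ^ ((k : ℝ) * p) * volume (E k)
  set a : ℤ × ℤ → ℝ≥0∞ := fun q => (2 : ℝ≥0∞) ^ ((q.1 : ℝ) + 1) * 2 ^ ((q.2 : ℝ) + 1) *
    ∫⁻ s in E q.1, ∫⁻ t in E q.2, ENNReal.ofReal (|t - s| ^ (2 * H - 2))
  have hterm (k : ℤ) (d : ℕ) :
      a (k + d, k) + a (k, k + d) ≤ 8 * c * (X (k + d) * X k ^ γ * δ ^ d) :=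
    calc a (k + d, k) + a (k, k + d)
        = 2 ^ (((k + d : ℤ) : ℝ) + 1) * 2 ^ ((k : ℝ) + 1) *
            ((∫⁻ s in E (k + d), ∫⁻ t in E k, ENNReal.ofReal (|t - s| ^ (2 * H - 2))) +
              ∫⁻ s in E k, ∫⁻ t in E (k + d), ENNReal.ofReal (|t - s| ^ (2 * H - 2))) := by
          simp only [a]; ring
      _ ≤ 2 ^ (((k + d : ℤ) : ℝ) + 1) * 2 ^ ((k : ℝ) + 1) *
            (2 * c * (volume (E (k + d)) * volume (E k) ^ γ)) := by
          gcongr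
          exact hker _ _
      _ = 8 * c * (X (k + d) * X k ^ γ * δ ^ d) := by
          rw [two_rpow_add_one_mul_two_rpow_add_one hpγ,
            ENNReal.mul_rpow_of_nonneg _ _ (by linarith)]
          ring
  calc ∫⁻ s, ∫⁻ t, ENNReal.ofReal (|t - s| ^ (2 * H - 2)) * ENNReal.ofReal |f s| *
          ENNReal.ofReal |f t|
      ≤ ∑' q, a q := lintegral_lintegral_mul_abs_le_tsum_dyadicLevelSet (by fun_prop) hf
    _ ≤ ∑' x : ℕ × ℤ, (a (x.2 + x.1, x.2) + a (x.2, x.2 + x.1)) := ENNReal.tsum_int_prod_le a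
    _ ≤ ∑' x : ℕ × ℤ, 8 * c * (X (x.2 + x.1) * X x.2 ^ γ * δ ^ x.1) :=
        ENNReal.tsum_le_tsum fun x => hterm x.2 x.1
    _ ≤ 8 * c * ((1 - δ)⁻¹ * (∑' k, X k) ^ (1 + γ)) := by
        rw [ENNReal.tsum_mul_left]
        gcongr
        exact ENNReal.tsum_shift_mul_rpow_mul_pow_le X (by linarith) δ
    _ ≤ 8 * c * ((1 - δ)⁻¹ * (∫⁻ s, ENNReal.ofReal (|f s| ^ p)) ^ (2 * H)) := by
        rw [show 1 + γ = 2 * H by ring]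
        gcongr
        exact tsum_two_rpow_mul_measure_dyadicLevelSet_le hf (by positivity) volume
    _ = _ := (mul_assoc _ _ _).symm

/-- **Hardy–Littlewood–Sobolev inequality** (embedding of `L^{1/H}([0,T])` into the
Hilbert space of fractional Brownian motion with Hurst parameter `H > 1/2`).
Fix `H ∈ (1/2, 1)`. There is a constant `C > 0`, depending only on `H`, such that for every
`T > 0` and every measurable `f : ℝ → ℝ` vanishing outside `[0, T]` with
`∫_0^T |f|^{1/H} < ∞`, one has
`H(2H-1) ∫∫ |t-s|^{2H-2} |f(s)| |f(t)| ds dt ≤ C (∫_0^T |f(s)|^{1/H} ds)^{2H}`. -/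
theorem hardy_littlewood_sobolev (H : ℝ) (hH1 : 1 / 2 < H) (hH2 : H < 1) :
    ∃ C > 0, ∀ T > (0 : ℝ), ∀ f : ℝ → ℝ, Measurable f →
      (∀ s, s ∉ Set.Icc (0 : ℝ) T → f s = 0) →
      (∫⁻ s in Set.Icc (0 : ℝ) T, ENNReal.ofReal (|f s| ^ (1 / H))) < ⊤ →
      (∫⁻ s : ℝ, ∫⁻ t : ℝ,
          ENNReal.ofReal (H * (2 * H - 1) * |t - s| ^ (2 * H - 2) * |f s| * |f t|))
        ≤ ENNReal.ofReal (C * (∫ s in Set.Icc (0 : ℝ) T, |f s| ^ (1 / H)) ^ (2 * H)) := by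
  have hK : hlsConst H ≠ ⊤ := hlsConst_ne_top (by linarith) hH2
  refine ⟨(hlsConst H).toReal + 1, by positivity, fun T _ f hf hsupp hfin => ?_⟩
  have hcoef : H * (2 * H - 1) ≤ 1 := by nlinarith
  calc (∫⁻ s : ℝ, ∫⁻ t : ℝ,
          ENNReal.ofReal (H * (2 * H - 1) * |t - s| ^ (2 * H - 2) * |f s| * |f t|))
      ≤ ∫⁻ s, ∫⁻ t, ENNReal.ofReal (|t - s| ^ (2 * H - 2)) * ENNReal.ofReal |f s| *
          ENNReal.ofReal |f t| := by
        gcongr with s t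
        rw [← ENNReal.ofReal_mul (by positivity), ← ENNReal.ofReal_mul (by positivity)]
        refine ENNReal.ofReal_le_ofReal ?_
        rw [mul_assoc, mul_assoc, mul_assoc (|t - s| ^ (2 * H - 2))]
        exact mul_le_of_le_one_left (by positivity) hcoef
    _ ≤ hlsConst H * (∫⁻ s, ENNReal.ofReal (|f s| ^ (1 / H))) ^ (2 * H) :=
        lintegral_lintegral_abs_sub_rpow_mul_le hH1 hH2 hf
    _ = hlsConst H * ENNReal.ofReal (∫ s in Icc (0 : ℝ) T, |f s| ^ (1 / H)) ^ (2 * H) := by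
        rw [lintegral_ofReal_abs_rpow_eq_ofReal_setIntegral hf (by positivity) hsupp hfin.ne]
    _ ≤ ENNReal.ofReal (((hlsConst H).toReal + 1) *
          (∫ s in Icc (0 : ℝ) T, |f s| ^ (1 / H)) ^ (2 * H)) := by
        rw [ENNReal.ofReal_mul (by positivity),
          ENNReal.ofReal_rpow_of_nonneg (by positivity) (by linarith)]
        gcongr
        exact (ENNReal.le_ofReal_iff_toReal_le hK (by positivity)).2 (by linarith)
end
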